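/- arXiv:2402.10234 — 3 statements merged into one kernel-verified Lean document; each statement's English description precedes it below -/
import Mathlib

section
/- Let n ≥ 2 and suppose x : ℝ → ((Fin n → Bool) → ℝ) satisfies the TASEP master equation with rates α, β, h. Then the function t ↦ ⟨τ_0⟩(t) = Σ_{s : s 0 = true} x t s is differentiable and its derivative at every t equals h 1 * ⟨τ_1 ξ_0⟩(t) − β * ⟨τ_0⟩(t), where ⟨τ_1 ξ_0⟩(t) = Σ_{s : s 1 = true ∧ s 0 = false} x t s. -/
open Finset

/-- The occupation status of site `k` in state `s` (false if `k` is not a valid site). -/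
def occ (n : ℕ) (s : Fin n → Bool) (k : ℕ) : Bool :=
  if hk : k < n then s ⟨k, hk⟩ else false

/-- Update the occupation status of site `k` in state `s` to `b`. -/
def upd (n : ℕ) (s : Fin n → Bool) (k : ℕ) (b : Bool) : Fin n → Bool :=
  if hk : k < n then Function.update s ⟨k, hk⟩ b else s

/-- `x : ℝ → (Fin n → Bool) → ℝ` satisfies the TASEP master equation with entry rate `α`,
exit rate `β` and internal rates `h`. -/
def MasterEq (n : ℕ) (α β : ℝ) (h : ℕ → ℝ) (x : ℝ → (Fin n → Bool) → ℝ) : Prop :=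
  ∀ (s : Fin n → Bool) (t : ℝ),
    HasDerivAt (fun τ => x τ s)
      ((if occ n s (n-1) = true then α * x t (upd n s (n-1) false) else 0)
        + (if occ n s 0 = false then β * x t (upd n s 0 true) else 0)
        + (∑ k ∈ Finset.Icc 1 (n-1),
            if occ n s k = false ∧ occ n s (k-1) = true
              then h k * x t (upd n (upd n s k true) (k-1) false) else 0)
        - x t s * ((if occ n s (n-1) = false then α else 0)
            + (if occ n s 0 = true then β else 0)
            + ∑ k ∈ Finset.Icc 1 (n-1),
                if occ n s k = true ∧ occ n s (k-1) = false then h k else 0)) t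


/-!
Multiplying the master equation by an observable `f` and summing over states, each inflow term
can be reindexed by the state the transition starts from; this gives the dual form
`d/dt ∑ f x = ∑_s x s ∑_{s → s'} rate · (f s' - f s)`. For `f = τ_0` only two transitions
change the observable: the exit at site `0`, which contributes `-β ⟨τ_0⟩`, and the hop from
site `1` to site `0`, which contributes `h 1 ⟨τ_1 ξ_0⟩`.
-/

section States

variable {n : ℕ}

theorem occ_upd_self (s : Fin n → Bool) {k : ℕ} (hk : k < n) (b : Bool) :
    occ n (upd n s k b) k = b := by
  simp [occ, upd, hk]

theorem occ_upd_of_ne (s : Fin n → Bool) {j k : ℕ} (hjk : j ≠ k) (b : Bool) :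
    occ n (upd n s k b) j = occ n s j := by
  unfold occ upd
  split_ifs <;> simp [Fin.ext_iff, hjk]

theorem upd_upd_self (s : Fin n → Bool) (k : ℕ) (b c : Bool) :
    upd n (upd n s k b) k c = upd n s k c := by
  unfold upd
  split_ifs <;> simp

theorem upd_eq_self {s : Fin n → Bool} {k : ℕ} {b : Bool} (h : occ n s k = b) :
    upd n s k b = s := by
  unfold occ at h
  unfold upd
  split_ifs with hk
  · simp [← h, hk]
  · rfl

theorem upd_comm (s : Fin n → Bool) {j k : ℕ} (hjk : j ≠ k) (b c : Bool) :
    upd n (upd n s j b) k c = upd n (upd n s k c) j b := by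
  unfold upd
  split_ifs <;> try rfl
  exact Function.update_comm
    (show (⟨j, ‹j < n›⟩ : Fin n) ≠ ⟨k, ‹k < n›⟩ from Fin.ne_of_val_ne hjk) b c s

end States

theorem Fintype.sum_ite_comp_eq {α M : Type*} [Fintype α] [AddCommMonoid M]
    {p q : α → Prop} [DecidablePred p] [DecidablePred q] (φ ψ : α → α)
    (hφ : ∀ s, p s → q (φ s)) (hψ : ∀ s, q s → p (ψ s))
    (hψφ : ∀ s, p s → ψ (φ s) = s) (hφψ : ∀ s, q s → φ (ψ s) = s) (g : α → α → M) :
    ∑ s, (if p s then g s (φ s) else 0) = ∑ s, if q s then g (ψ s) s else 0 := by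
  rw [← sum_filter, ← sum_filter]
  refine sum_nbij' φ ψ ?_ ?_ ?_ ?_ ?_ <;> intro s hs <;>
    simp only [mem_filter, mem_univ, true_and] at hs ⊢
  · exact hφ s hs
  · exact hψ s hs
  · exact hψφ s hs
  · exact hφψ s hs
  · rw [hψφ s hs]

/-- Net flux into `s` of the transitions at rate `r` that set site `k` to `b`. -/
def flipFlux (n : ℕ) (r : ℝ) (k : ℕ) (b : Bool) (y : (Fin n → Bool) → ℝ)
    (s : Fin n → Bool) : ℝ :=
  (if occ n s k = b then r * y (upd n s k !b) else 0)
    - y s * (if occ n s k = !b then r else 0)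

/-- Net flux into `s` of the hops at rate `r` of a particle from site `i` to site `j`. -/
def hopFlux (n : ℕ) (r : ℝ) (i j : ℕ) (y : (Fin n → Bool) → ℝ) (s : Fin n → Bool) : ℝ :=
  (if occ n s i = false ∧ occ n s j = true then r * y (upd n (upd n s i true) j false) else 0)
    - y s * (if occ n s i = true ∧ occ n s j = false then r else 0)

theorem MasterEq.hasDerivAt_sum_mul {n : ℕ} {α β : ℝ} {h : ℕ → ℝ}
    {x : ℝ → (Fin n → Bool) → ℝ} (hx : MasterEq n α β h x) (f : (Fin n → Bool) → ℝ) (t : ℝ) :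
    HasDerivAt (fun τ => ∑ s, f s * x τ s)
      (∑ s, f s * flipFlux n α (n - 1) true (x t) s + ∑ s, f s * flipFlux n β 0 false (x t) s
        + ∑ k ∈ Icc 1 (n - 1), ∑ s, f s * hopFlux n (h k) k (k - 1) (x t) s) t := by
  refine (HasDerivAt.fun_sum fun s _ => (hx s t).const_mul (f s)).congr_deriv ?_
  simp only [sum_comm (s := Icc 1 (n - 1)), ← sum_add_distrib, ← mul_sum, ← mul_add]
  refine sum_congr rfl fun s _ => ?_
  simp only [flipFlux, hopFlux, Bool.not_true, Bool.not_false, sum_sub_distrib, ← mul_sum]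
  ring

theorem sum_mul_flipFlux {n : ℕ} (r : ℝ) {k : ℕ} (hk : k < n) (b : Bool)
    (f y : (Fin n → Bool) → ℝ) :
    ∑ s, f s * flipFlux n r k b y s
      = ∑ s, y s * (if occ n s k = !b then r * (f (upd n s k b) - f s) else 0) := by
  calc ∑ s, f s * flipFlux n r k b y s
      = ∑ s, (if occ n s k = b then f s * (r * y (upd n s k !b)) else 0)
          - ∑ s, (if occ n s k = !b then f s * (r * y s) else 0) := by
        rw [← sum_sub_distrib]
        refine sum_congr rfl fun s _ => ?_
        unfold flipFlux
        split_ifs <;> ring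
    _ = ∑ s, (if occ n s k = !b then f (upd n s k b) * (r * y s) else 0)
          - ∑ s, (if occ n s k = !b then f s * (r * y s) else 0) := by
        rw [Fintype.sum_ite_comp_eq (upd n · k !b) (upd n · k b)
          (fun s _ => occ_upd_self s hk _) (fun s _ => occ_upd_self s hk _)
          (fun s hs => by rw [upd_upd_self, upd_eq_self hs])
          (fun s hs => by rw [upd_upd_self, upd_eq_self hs]) (fun s u => f s * (r * y u))]
    _ = _ := by
        rw [← sum_sub_distrib]
        refine sum_congr rfl fun s _ => ?_
        split_ifs <;> ring

theorem sum_mul_hopFlux {n : ℕ} (r : ℝ) {i j : ℕ} (hi : i < n) (hj : j < n) (hij : i ≠ j)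
    (f y : (Fin n → Bool) → ℝ) :
    ∑ s, f s * hopFlux n r i j y s
      = ∑ s, y s * (if occ n s i = true ∧ occ n s j = false
          then r * (f (upd n (upd n s i false) j true) - f s) else 0) := by
  have hmaps (s : Fin n → Bool) (a b : Bool) : occ n (upd n (upd n s i a) j b) i = a ∧
      occ n (upd n (upd n s i a) j b) j = b := by
    rw [occ_upd_of_ne _ hij, occ_upd_self _ hi, occ_upd_self _ hj]
    exact ⟨rfl, rfl⟩
  have hinv (s : Fin n → Bool) (a b a' b' : Bool) (hs : occ n s i = a' ∧ occ n s j = b') :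
      upd n (upd n (upd n (upd n s i a) j b) i a') j b' = s := by
    rw [upd_comm _ hij.symm, upd_upd_self, upd_upd_self,
      upd_eq_self (by rw [occ_upd_of_ne _ hij.symm, hs.2]), upd_eq_self hs.1]
  calc ∑ s, f s * hopFlux n r i j y s
      = ∑ s, (if occ n s i = false ∧ occ n s j = true
            then f s * (r * y (upd n (upd n s i true) j false)) else 0)
          - ∑ s, (if occ n s i = true ∧ occ n s j = false then f s * (r * y s) else 0) := by
        rw [← sum_sub_distrib]
        refine sum_congr rfl fun s _ => ?_
        unfold hopFlux
        split_ifs <;> ring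
    _ = ∑ s, (if occ n s i = true ∧ occ n s j = false
            then f (upd n (upd n s i false) j true) * (r * y s) else 0)
          - ∑ s, (if occ n s i = true ∧ occ n s j = false then f s * (r * y s) else 0) := by
        rw [Fintype.sum_ite_comp_eq (fun s => upd n (upd n s i true) j false)
          (fun s => upd n (upd n s i false) j true) (fun s _ => hmaps s _ _)
          (fun s _ => hmaps s _ _) (fun s hs => hinv s _ _ _ _ hs) (fun s hs => hinv s _ _ _ _ hs)
          (fun s u => f s * (r * y u))]
    _ = _ := by
        rw [← sum_sub_distrib]
        refine sum_congr rfl fun s _ => ?_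
        split_ifs <;> ring

/-- The occupation number `τ_m` of site `m`. -/
def occupation (n m : ℕ) (s : Fin n → Bool) : ℝ :=
  if occ n s m = true then 1 else 0

section Occupation

variable {n : ℕ}

theorem sum_filter_occ_eq_sum_occupation_mul (m : ℕ) (g : (Fin n → Bool) → ℝ) :
    ∑ s with occ n s m = true, g s = ∑ s, occupation n m s * g s := by
  simp only [sum_filter, occupation, boole_mul]

theorem sum_occupation_mul_flipFlux_of_ne {m k : ℕ} (hk : k < n) (hmk : m ≠ k) (r : ℝ)
    (b : Bool) (y : (Fin n → Bool) → ℝ) :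
    ∑ s, occupation n m s * flipFlux n r k b y s = 0 := by
  rw [sum_mul_flipFlux r hk]
  simp [occupation, occ_upd_of_ne _ hmk]

theorem sum_occupation_mul_flipFlux_false_self {k : ℕ} (hk : k < n) (r : ℝ)
    (y : (Fin n → Bool) → ℝ) :
    ∑ s, occupation n k s * flipFlux n r k false y s
      = -(r * ∑ s with occ n s k = true, y s) := by
  rw [sum_mul_flipFlux r hk, sum_filter, mul_sum, ← sum_neg_distrib]
  refine sum_congr rfl fun s _ => ?_
  cases hs : occ n s k <;> simp [occupation, occ_upd_self _ hk, hs, mul_comm]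

theorem sum_occupation_mul_hopFlux_of_ne {m i j : ℕ} (hi : i < n) (hj : j < n) (hij : i ≠ j)
    (hmi : m ≠ i) (hmj : m ≠ j) (r : ℝ) (y : (Fin n → Bool) → ℝ) :
    ∑ s, occupation n m s * hopFlux n r i j y s = 0 := by
  rw [sum_mul_hopFlux r hi hj hij]
  simp [occupation, occ_upd_of_ne _ hmi, occ_upd_of_ne _ hmj]

theorem sum_occupation_mul_hopFlux_target {i j : ℕ} (hi : i < n) (hj : j < n) (hij : i ≠ j)
    (r : ℝ) (y : (Fin n → Bool) → ℝ) :
    ∑ s, occupation n j s * hopFlux n r i j y s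
      = r * ∑ s with occ n s i = true ∧ occ n s j = false, y s := by
  rw [sum_mul_hopFlux r hi hj hij, sum_filter, mul_sum]
  refine sum_congr rfl fun s _ => ?_
  split_ifs with hs
  · simp [occupation, occ_upd_self _ hj, hs.2, mul_comm]
  · simp

end Occupation

theorem tasep_occupation_derivative_exit
    (n : ℕ) (hn : 2 ≤ n) (α β : ℝ) (h : ℕ → ℝ)
    (x : ℝ → (Fin n → Bool) → ℝ) (hx : MasterEq n α β h x) (t : ℝ) :
    HasDerivAt
      (fun τ => ∑ s ∈ Finset.univ.filter (fun s : Fin n → Bool => occ n s 0 = true), x τ s)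
      (h 1 * (∑ s ∈ Finset.univ.filter
            (fun s : Fin n → Bool => occ n s 1 = true ∧ occ n s 0 = false), x t s)
        - β * (∑ s ∈ Finset.univ.filter
            (fun s : Fin n → Bool => occ n s 0 = true), x t s)) t := by
  have hd := hx.hasDerivAt_sum_mul (occupation n 0) t
  have hIcc : Icc 1 (n - 1) = insert 1 (Icc 2 (n - 1)) := by
    ext k
    simp only [mem_Icc, mem_insert]
    omega
  have hbulk : ∀ k ∈ Icc 2 (n - 1),
      ∑ s, occupation n 0 s * hopFlux n (h k) k (k - 1) (x t) s = 0 := by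
    intro k hk
    rw [mem_Icc] at hk
    exact sum_occupation_mul_hopFlux_of_ne (by omega) (by omega) (by omega) (by omega) (by omega)
      _ _
  rw [sum_occupation_mul_flipFlux_of_ne (by omega) (by omega),
    sum_occupation_mul_flipFlux_false_self (by omega), hIcc, sum_insert (by simp),
    Nat.sub_self, sum_occupation_mul_hopFlux_target (by omega) (by omega) one_ne_zero,
    sum_eq_zero hbulk] at hd
  simp only [← sum_filter_occ_eq_sum_occupation_mul] at hd
  convert hd using 1
  ring
end

section
/- Let n ≥ 4 and suppose x : ℝ → ((Fin n → Bool) → ℝ) satisfies the TASEP master equation with rates α, β, h. Then for every k with 2 ≤ k ≤ n-2, the function t ↦ ⟨τ_k ξ_{k-1}⟩(t) = Σ_{s : s k = true ∧ s (k-1) = false} x t s is differentiable and its derivative at every t equals h (k+1) * ⟨τ_{k+1} ξ_k ξ_{k-1}⟩(t) + h (k-1) * ⟨τ_k τ_{k-1} ξ_{k-2}⟩(t) − h k * ⟨τ_k ξ_{k-1}⟩(t), where ⟨τ_{k+1} ξ_k ξ_{k-1}⟩(t) = Σ_{s : s (k+1) = true ∧ s k = false ∧ s (k-1) = false} x t s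 and ⟨τ_k τ_{k-1} ξ_{k-2}⟩(t) = Σ_{s : s k = true ∧ s (k-1) = true ∧ s (k-2) = false} x t s. -/
open Finset

/-!
Multiplying the master equation by the indicator `f` of `τ_k ξ_{k-1}` and summing over states,
each jump `s ↦ σ s` enters through a gain term at `s` fed by `σ s` and a loss term at `s`. Every
jump map is an involution, so reindexing the gain terms along `σ` moves the master operator onto
`f`: `d/dt ∑ f x = ∑ (L f) x`, where `(L f)(s)` sums `rate · (f (σ s) - f s)` over the jumps
enabled at `s`. Entry at site `n - 1`, exit at site `0` and hops not touching sites `k`, `k - 1` do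
not change `f`; the hops `k + 1 → k`, `k - 1 → k - 2` and `k → k - 1` give the three terms.
-/

namespace TASEP

section Jump

/- For the jump `s ↦ σ s` enabled at the states satisfying `p`, `jumpFlux` is its contribution to
the master equation (gain minus loss) and `jumpDrift` its contribution to the generator acting on
observables. -/

variable {S : Type*} [Fintype S] (σ : S → S) (p : S → Prop) [DecidablePred p]

def jumpFlux (y : S → ℝ) (s : S) : ℝ :=
  (if p (σ s) then y (σ s) else 0) - if p s then y s else 0

def jumpDrift (f : S → ℝ) (s : S) : ℝ :=
  if p s then f (σ s) - f s else 0

variable {σ} in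
theorem sum_mul_jumpFlux (hσ : Function.Involutive σ) (f y : S → ℝ) :
    ∑ s, f s * jumpFlux σ p y s = ∑ s, jumpDrift σ p f s * y s := by
  have reindex : ∑ s, f s * (if p (σ s) then y (σ s) else 0)
      = ∑ s, f (σ s) * (if p s then y s else 0) :=
    Fintype.sum_bijective σ hσ.bijective _ _ fun s => by rw [hσ s]
  simp only [jumpFlux, mul_sub]
  rw [sum_sub_distrib, reindex, ← sum_sub_distrib]
  refine sum_congr rfl fun s _ => ?_
  simp only [jumpDrift]
  split_ifs <;> ring

theorem sum_filter_eq_sum_boole_mul (P : S → Prop) [DecidablePred P] (y : S → ℝ) :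
    ∑ s ∈ univ.filter P, y s = ∑ s, (if P s then 1 else 0) * y s := by
  simp only [sum_filter, boole_mul]

end Jump

variable {n : ℕ}

theorem occ_upd (s : Fin n → Bool) {j : ℕ} (hj : j < n) (b : Bool) (i : ℕ) :
    occ n (upd n s j b) i = if i = j then b else occ n s i := by
  unfold occ upd
  rw [dif_pos hj]
  by_cases hi : i < n
  · simp [hi, Function.update_apply, Fin.ext_iff]
  · rw [dif_neg hi, dif_neg hi, if_neg]
    rintro rfl
    exact hi hj

theorem eq_of_occ_eq {s s' : Fin n → Bool} (h : ∀ i, occ n s i = occ n s' i) : s = s' := by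
  funext i
  simpa [occ] using h i

def flipSite (n m : ℕ) (s : Fin n → Bool) : Fin n → Bool :=
  upd n s m (!occ n s m)

def swapSites (n j : ℕ) (s : Fin n → Bool) : Fin n → Bool :=
  upd n (upd n s j (occ n s (j - 1))) (j - 1) (occ n s j)

theorem occ_flipSite (s : Fin n → Bool) {m : ℕ} (hm : m < n) (i : ℕ) :
    occ n (flipSite n m s) i = if i = m then !occ n s m else occ n s i :=
  occ_upd s hm _ i

theorem occ_swapSites (s : Fin n → Bool) {j : ℕ} (hj : j < n) (i : ℕ) :
    occ n (swapSites n j s) i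
      = if i = j - 1 then occ n s j else if i = j then occ n s (j - 1) else occ n s i := by
  rw [swapSites, occ_upd _ (by omega), occ_upd _ hj]

theorem flipSite_involutive {m : ℕ} (hm : m < n) : Function.Involutive (flipSite n m) :=
  fun s => eq_of_occ_eq fun i => by
    simp only [occ_flipSite _ hm]
    split_ifs <;> simp_all

theorem swapSites_involutive {j : ℕ} (hj1 : 1 ≤ j) (hj : j < n) :
    Function.Involutive (swapSites n j) :=
  fun s => eq_of_occ_eq fun i => by
    simp only [occ_swapSites _ hj]
    split_ifs <;> first | rfl | (subst_vars; rfl) | omega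

def masterRHS (n : ℕ) (α β : ℝ) (h : ℕ → ℝ) (y : (Fin n → Bool) → ℝ) (s : Fin n → Bool) : ℝ :=
  (if occ n s (n-1) = true then α * y (upd n s (n-1) false) else 0)
    + (if occ n s 0 = false then β * y (upd n s 0 true) else 0)
    + (∑ j ∈ Icc 1 (n-1),
        if occ n s j = false ∧ occ n s (j-1) = true
          then h j * y (upd n (upd n s j true) (j-1) false) else 0)
    - y s * ((if occ n s (n-1) = false then α else 0)
        + (if occ n s 0 = true then β else 0)
        + ∑ j ∈ Icc 1 (n-1),
            if occ n s j = true ∧ occ n s (j-1) = false then h j else 0)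

theorem MasterEq.hasDerivAt {α β : ℝ} {h : ℕ → ℝ} {x : ℝ → (Fin n → Bool) → ℝ}
    (hx : MasterEq n α β h x) (s : Fin n → Bool) (t : ℝ) :
    HasDerivAt (fun τ => x τ s) (masterRHS n α β h (x t) s) t :=
  hx s t

def generator (n : ℕ) (α β : ℝ) (h : ℕ → ℝ) (f : (Fin n → Bool) → ℝ) (s : Fin n → Bool) : ℝ :=
  α * jumpDrift (flipSite n (n - 1)) (fun s => occ n s (n - 1) = false) f s
    + β * jumpDrift (flipSite n 0) (fun s => occ n s 0 = true) f s
    + ∑ j ∈ Icc 1 (n - 1),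
        h j * jumpDrift (swapSites n j) (fun s => occ n s j = true ∧ occ n s (j - 1) = false) f s

theorem masterRHS_eq_sum_jumpFlux (hn : 0 < n) (α β : ℝ) (h : ℕ → ℝ) (y : (Fin n → Bool) → ℝ)
    (s : Fin n → Bool) :
    masterRHS n α β h y s =
      α * jumpFlux (flipSite n (n - 1)) (fun s => occ n s (n - 1) = false) y s
        + β * jumpFlux (flipSite n 0) (fun s => occ n s 0 = true) y s
        + ∑ j ∈ Icc 1 (n - 1),
            h j * jumpFlux (swapSites n j)
              (fun s => occ n s j = true ∧ occ n s (j - 1) = false) y s := by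
  have entry : (if occ n s (n-1) = true then α * y (upd n s (n-1) false) else 0)
      - y s * (if occ n s (n-1) = false then α else 0)
      = α * jumpFlux (flipSite n (n - 1)) (fun s => occ n s (n - 1) = false) y s := by
    cases hs : occ n s (n - 1) <;>
      simp [jumpFlux, flipSite, occ_upd _ (Nat.sub_lt hn one_pos), hs, mul_comm]
  have exit : (if occ n s 0 = false then β * y (upd n s 0 true) else 0)
      - y s * (if occ n s 0 = true then β else 0)
      = β * jumpFlux (flipSite n 0) (fun s => occ n s 0 = true) y s := by
    cases hs : occ n s 0 <;> simp [jumpFlux, flipSite, occ_upd _ hn, hs, mul_comm]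
  have hop : ∀ j ∈ Icc 1 (n - 1),
      (if occ n s j = false ∧ occ n s (j-1) = true
          then h j * y (upd n (upd n s j true) (j-1) false) else 0)
        - y s * (if occ n s j = true ∧ occ n s (j-1) = false then h j else 0)
      = h j * jumpFlux (swapSites n j)
          (fun s => occ n s j = true ∧ occ n s (j - 1) = false) y s := by
    intro j hj
    rw [mem_Icc] at hj
    have hne : j ≠ j - 1 := by omega
    cases hs : occ n s j <;> cases hs' : occ n s (j - 1) <;>
      simp [jumpFlux, swapSites, occ_upd _ (show j < n by omega),
        occ_upd _ (show j - 1 < n by omega), hs, hs', hne, mul_comm]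
  rw [← entry, ← exit, ← sum_congr rfl hop, masterRHS, sum_sub_distrib, ← mul_sum]
  ring

theorem sum_mul_masterRHS (hn : 0 < n) (α β : ℝ) (h : ℕ → ℝ) (f y : (Fin n → Bool) → ℝ) :
    ∑ s, f s * masterRHS n α β h y s = ∑ s, generator n α β h f s * y s := by
  have scaled_duality {σ : (Fin n → Bool) → Fin n → Bool} (hσ : Function.Involutive σ)
      (p : (Fin n → Bool) → Prop) [DecidablePred p] (c : ℝ) :
      ∑ s, f s * (c * jumpFlux σ p y s) = ∑ s, c * jumpDrift σ p f s * y s := by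
    simp only [mul_left_comm (f _), mul_assoc, ← mul_sum, sum_mul_jumpFlux p hσ]
  simp only [masterRHS_eq_sum_jumpFlux hn, generator, mul_add, add_mul, sum_add_distrib, mul_sum,
    sum_mul]
  rw [sum_comm, sum_comm (s := univ) (t := Icc 1 (n - 1))]
  congr 1
  · congr 1
    · exact scaled_duality (flipSite_involutive (by omega)) _ α
    · exact scaled_duality (flipSite_involutive hn) _ β
  · refine sum_congr rfl fun j hj => ?_
    rw [mem_Icc] at hj
    exact scaled_duality (swapSites_involutive hj.1 (by omega)) _ (h j)

section PairObservable

variable (n k : ℕ)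

def pairObs (s : Fin n → Bool) : ℝ := if occ n s k = true ∧ occ n s (k - 1) = false then 1 else 0

def gainObsRight (s : Fin n → Bool) : ℝ :=
  if occ n s (k + 1) = true ∧ occ n s k = false ∧ occ n s (k - 1) = false then 1 else 0

def gainObsLeft (s : Fin n → Bool) : ℝ :=
  if occ n s k = true ∧ occ n s (k - 1) = true ∧ occ n s (k - 2) = false then 1 else 0

variable {n k}

theorem jumpDrift_flipSite_pairObs {m : ℕ} (hm : m < n) (hmk : m ≠ k) (hmk' : m ≠ k - 1)
    (p : (Fin n → Bool) → Prop) [DecidablePred p] (s : Fin n → Bool) :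
    jumpDrift (flipSite n m) p (pairObs n k) s = 0 := by
  simp [jumpDrift, pairObs, occ_flipSite _ hm, hmk.symm, hmk'.symm]

theorem jumpDrift_swapSites_pairObs (hk : 2 ≤ k) {j : ℕ} (hj : j < n) (s : Fin n → Bool) :
    jumpDrift (swapSites n j) (fun s => occ n s j = true ∧ occ n s (j - 1) = false)
        (pairObs n k) s
      = (if j = k + 1 then gainObsRight n k s else 0)
        + (if j = k - 1 then gainObsLeft n k s else 0)
        - (if j = k then pairObs n k s else 0) := by
  simp only [jumpDrift, pairObs, gainObsRight, gainObsLeft, occ_swapSites _ hj]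
  rcases (by omega :
      j = k + 1 ∨ k = j ∨ j = k - 1 ∨ (j ≠ k + 1 ∧ j ≠ k ∧ j ≠ k - 1 ∧ k ≠ j - 1))
    with rfl | rfl | rfl | ⟨h1, h2, h3, h4⟩
  · have e : k + 1 - 1 = k := by omega
    have e1 : k - 1 ≠ k := by omega
    have e2 : k - 1 ≠ k + 1 := by omega
    have e3 : k ≠ k + 1 := by omega
    simp only [e, e1, e2, e3, e2.symm, e3.symm, if_true, if_false]
    cases occ n s (k + 1) <;> cases occ n s k <;> cases occ n s (k - 1) <;> norm_num
  · have e1 : k ≠ k - 1 := by omega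
    have e2 : k ≠ k + 1 := by omega
    simp only [e1, e2, e1.symm, if_true, if_false]
    cases occ n s k <;> cases occ n s (k - 1) <;> norm_num
  · have e : k - 1 - 1 = k - 2 := by omega
    have e1 : k ≠ k - 2 := by omega
    have e2 : k ≠ k - 1 := by omega
    have e3 : k - 1 ≠ k - 2 := by omega
    have e4 : k - 1 ≠ k + 1 := by omega
    simp only [e, e1, e2, e3, e4, e2.symm, if_true, if_false]
    cases occ n s k <;> cases occ n s (k - 1) <;> cases occ n s (k - 2) <;> norm_num
  · have h5 : k - 1 ≠ j - 1 := by omega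
    have h6 : k - 1 ≠ j := by omega
    simp [h1, h2, h3, h4, h5, h6, Ne.symm h2]

theorem generator_pairObs (hk : 2 ≤ k) (hkn : k ≤ n - 2) (α β : ℝ) (h : ℕ → ℝ)
    (s : Fin n → Bool) :
    generator n α β h (pairObs n k) s
      = h (k + 1) * gainObsRight n k s + h (k - 1) * gainObsLeft n k s - h k * pairObs n k s := by
  have hop : ∀ j ∈ Icc 1 (n - 1), h j * jumpDrift (swapSites n j)
        (fun s => occ n s j = true ∧ occ n s (j - 1) = false) (pairObs n k) s
      = (if j = k + 1 then h (k + 1) * gainObsRight n k s else 0)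
        + (if j = k - 1 then h (k - 1) * gainObsLeft n k s else 0)
        - (if j = k then h k * pairObs n k s else 0) := by
    intro j hj
    rw [mem_Icc] at hj
    rw [jumpDrift_swapSites_pairObs hk (by omega)]
    split_ifs <;> (try omega) <;> subst_vars <;> ring
  rw [generator, jumpDrift_flipSite_pairObs (by omega) (by omega) (by omega),
    jumpDrift_flipSite_pairObs (by omega) (by omega) (by omega), sum_congr rfl hop,
    sum_sub_distrib, sum_add_distrib, sum_ite_eq', sum_ite_eq', sum_ite_eq',
    if_pos (mem_Icc.2 ⟨by omega, by omega⟩), if_pos (mem_Icc.2 ⟨by omega, by omega⟩),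
    if_pos (mem_Icc.2 ⟨by omega, by omega⟩)]
  ring

theorem sum_filter_pairObs_masterRHS (hk : 2 ≤ k) (hkn : k ≤ n - 2) (α β : ℝ) (h : ℕ → ℝ)
    (y : (Fin n → Bool) → ℝ) :
    ∑ s ∈ univ.filter (fun s : Fin n → Bool => occ n s k = true ∧ occ n s (k-1) = false),
        masterRHS n α β h y s
      = h (k+1) * (∑ s ∈ univ.filter (fun s : Fin n → Bool =>
            occ n s (k+1) = true ∧ occ n s k = false ∧ occ n s (k-1) = false), y s)
        + h (k-1) * (∑ s ∈ univ.filter (fun s : Fin n → Bool =>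
            occ n s k = true ∧ occ n s (k-1) = true ∧ occ n s (k-2) = false), y s)
        - h k * (∑ s ∈ univ.filter (fun s : Fin n → Bool =>
            occ n s k = true ∧ occ n s (k-1) = false), y s) := calc
  _ = ∑ s, pairObs n k s * masterRHS n α β h y s := sum_filter_eq_sum_boole_mul _ _
  _ = ∑ s, generator n α β h (pairObs n k) s * y s := sum_mul_masterRHS (by omega) α β h _ y
  _ = ∑ s, (h (k + 1) * gainObsRight n k s + h (k - 1) * gainObsLeft n k s
        - h k * pairObs n k s) * y s := by
    simp only [generator_pairObs hk hkn]
  _ = _ := by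
    simp only [add_mul, sub_mul, mul_assoc, sum_add_distrib, sum_sub_distrib, ← mul_sum, pairObs,
      gainObsRight, gainObsLeft, sum_filter_eq_sum_boole_mul]

end PairObservable

end TASEP

open TASEP in
theorem tasep_pair_correlation_derivative_general
    (n : ℕ) (α β : ℝ) (h : ℕ → ℝ)
    (x : ℝ → (Fin n → Bool) → ℝ) (hx : MasterEq n α β h x)
    (k : ℕ) (hk1 : 2 ≤ k) (hk2 : k ≤ n - 2) (t : ℝ) :
    HasDerivAt
      (fun τ => ∑ s ∈ Finset.univ.filter
          (fun s : Fin n → Bool => occ n s k = true ∧ occ n s (k-1) = false), x τ s)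
      (h (k+1) * (∑ s ∈ Finset.univ.filter
            (fun s : Fin n → Bool =>
              occ n s (k+1) = true ∧ occ n s k = false ∧ occ n s (k-1) = false), x t s)
        + h (k-1) * (∑ s ∈ Finset.univ.filter
            (fun s : Fin n → Bool =>
              occ n s k = true ∧ occ n s (k-1) = true ∧ occ n s (k-2) = false), x t s)
        - h k * (∑ s ∈ Finset.univ.filter
            (fun s : Fin n → Bool => occ n s k = true ∧ occ n s (k-1) = false), x t s)) t :=
  (HasDerivAt.fun_sum fun s _ => hx.hasDerivAt s t).congr_deriv
    (sum_filter_pairObs_masterRHS hk1 hk2 α β h (x t))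

theorem tasep_pair_correlation_derivative
    (n : ℕ) (hn : 4 ≤ n) (α β : ℝ) (h : ℕ → ℝ)
    (x : ℝ → (Fin n → Bool) → ℝ) (hx : MasterEq n α β h x)
    (k : ℕ) (hk1 : 2 ≤ k) (hk2 : k ≤ n - 2) (t : ℝ) :
    HasDerivAt
      (fun τ => ∑ s ∈ Finset.univ.filter
          (fun s : Fin n → Bool => occ n s k = true ∧ occ n s (k-1) = false), x τ s)
      (h (k+1) * (∑ s ∈ Finset.univ.filter
            (fun s : Fin n → Bool =>
              occ n s (k+1) = true ∧ occ n s k = false ∧ occ n s (k-1) = false), x t s)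
        + h (k-1) * (∑ s ∈ Finset.univ.filter
            (fun s : Fin n → Bool =>
              occ n s k = true ∧ occ n s (k-1) = true ∧ occ n s (k-2) = false), x t s)
        - h k * (∑ s ∈ Finset.univ.filter
            (fun s : Fin n → Bool => occ n s k = true ∧ occ n s (k-1) = false), x t s)) t :=
  tasep_pair_correlation_derivative_general n α β h x hx k hk1 hk2 t
end

section
/- Let U, V, W : Ω → ℝ be {0,1}-valued random variables, let A := {ω : V ω = 1} with P(A) > 0, and set ε₁ := P({ω : U ω = 0 ∧ W ω = 0} | A) and ε₃ := P({ω : U ω = 1 ∧ W ω = 0} | A). Then the conditional covariance of U and W given A satisfies |E[U * W | A] − E[U | A] * E[W | A]| ≤ ε₁ + 2 * ε₃. -/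
open MeasureTheory

/-- The conditional expectation of `V` given the event `A`: `E[V · 1_A] / P(A)`. -/
noncomputable def cexp {Ω : Type*} [MeasurableSpace Ω] (P : Measure Ω)
    (V : Ω → ℝ) (A : Set Ω) : ℝ :=
  (∫ ω, V ω * A.indicator (fun _ => (1 : ℝ)) ω ∂P) / (P A).toReal

/-- The conditional probability of the event `B` given the event `A`: `P(B ∩ A) / P(A)`. -/
noncomputable def cprob {Ω : Type*} [MeasurableSpace Ω] (P : Measure Ω)
    (B A : Set Ω) : ℝ :=
  (P (B ∩ A)).toReal / (P A).toReal

lemma cexp_eq_measure {Ω : Type*} [MeasurableSpace Ω] (P : Measure Ω) [IsProbabilityMeasure P]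
    (f : Ω → ℝ) (h01 : ∀ ω, f ω = 0 ∨ f ω = 1) (A : Set Ω) (hfA : MeasurableSet ({ω | f ω = 1} ∩ A)) :
    cexp P f A = (P ({ω | f ω = 1} ∩ A)).toReal / (P A).toReal := by
  unfold cexp
  congr 1
  have : (fun ω => f ω * A.indicator (fun _ => (1 : ℝ)) ω)
      = ({ω | f ω = 1} ∩ A).indicator (fun _ => (1 : ℝ)) := by
    funext ω
    by_cases hω : ω ∈ A
    · rcases h01 ω with h | h <;>
        simp [Set.indicator, hω, h]
    · simp [Set.indicator, hω]
  rw [this]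
  exact integral_indicator_one hfA

lemma abs_bound_aux (a b c d : ℝ) (ha : 0 ≤ a) (hb : 0 ≤ b) (hc : 0 ≤ c) (hd : 0 ≤ d) :
    |d * (a + b + c + d) - (c + d) * (b + d)| ≤ (a + 2 * c) * (a + b + c + d) := by
  have h : d * (a + b + c + d) - (c + d) * (b + d) = d * a - c * b := by ring
  rw [h, abs_le]
  constructor
  · nlinarith [mul_nonneg hd ha, mul_nonneg hc (add_nonneg (add_nonneg ha hc) hd),
      mul_nonneg (add_nonneg ha hc) (add_nonneg (add_nonneg (add_nonneg ha hb) hc) hd)]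
  · nlinarith [mul_nonneg hc hb, mul_nonneg ha (add_nonneg (add_nonneg ha hb) hc),
      mul_nonneg hc (add_nonneg (add_nonneg (add_nonneg ha hb) hc) hd)]

theorem cond_covariance_bound {Ω : Type*} [MeasurableSpace Ω]
    (P : Measure Ω) [IsProbabilityMeasure P] (U V W : Ω → ℝ)
    (hU : Measurable U) (hU01 : ∀ ω, U ω = 0 ∨ U ω = 1)
    (hV : Measurable V) (hV01 : ∀ ω, V ω = 0 ∨ V ω = 1)
    (hW : Measurable W) (hW01 : ∀ ω, W ω = 0 ∨ W ω = 1)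
    (A : Set Ω) (hA : A = {ω | V ω = 1}) (hPA : 0 < P A)
    (ε₁ : ℝ) (hε₁ : ε₁ = cprob P {ω | U ω = 0 ∧ W ω = 0} A)
    (ε₃ : ℝ) (hε₃ : ε₃ = cprob P {ω | U ω = 1 ∧ W ω = 0} A) :
    |cexp P (fun ω => U ω * W ω) A - cexp P U A * cexp P W A| ≤ ε₁ + 2 * ε₃ := by
  have hAm : MeasurableSet A := by
    rw [hA]; exact hV (measurableSet_singleton 1)
  have hUm : MeasurableSet {ω | U ω = 1} := hU (measurableSet_singleton 1)
  have hU0m : MeasurableSet {ω | U ω = 0} := hU (measurableSet_singleton 0)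
  have hWm : MeasurableSet {ω | W ω = 1} := hW (measurableSet_singleton 1)
  have hW0m : MeasurableSet {ω | W ω = 0} := hW (measurableSet_singleton 0)
  -- four cells
  set S00 := {ω | U ω = 0} ∩ {ω | W ω = 0} ∩ A with hS00
  set S01 := {ω | U ω = 0} ∩ {ω | W ω = 1} ∩ A with hS01
  set S10 := {ω | U ω = 1} ∩ {ω | W ω = 0} ∩ A with hS10
  set S11 := {ω | U ω = 1} ∩ {ω | W ω = 1} ∩ A with hS11
  have hm00 : MeasurableSet S00 := (hU0m.inter hW0m).inter hAm
  have hm01 : MeasurableSet S01 := (hU0m.inter hWm).inter hAm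
  have hm10 : MeasurableSet S10 := (hUm.inter hW0m).inter hAm
  have hm11 : MeasurableSet S11 := (hUm.inter hWm).inter hAm
  set a := (P S00).toReal with ha
  set b := (P S01).toReal with hb
  set c := (P S10).toReal with hc
  set d := (P S11).toReal with hd
  set p := (P A).toReal with hp
  have hpfin : ∀ s : Set Ω, P s ≠ ⊤ := fun s => measure_ne_top P s
  have hppos : 0 < p := ENNReal.toReal_pos (ne_of_gt hPA) (hpfin A)
  -- split P({U=1}∩A)
  have hUsplit : ({ω | U ω = 1} ∩ A) = S10 ∪ S11 := by
    ext ω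
    rcases hW01 ω with h | h <;>
      simp [hS10, hS11, h, and_assoc] <;> tauto
  have hU0split : ({ω | U ω = 0} ∩ A) = S00 ∪ S01 := by
    ext ω
    rcases hW01 ω with h | h <;>
      simp [hS00, hS01, h, and_assoc] <;> tauto
  have hWsplit : ({ω | W ω = 1} ∩ A) = S01 ∪ S11 := by
    ext ω
    rcases hU01 ω with h | h <;>
      simp [hS01, hS11, h] <;> tauto
  have hd1011 : Disjoint S10 S11 := by
    rw [Set.disjoint_left]; rintro ω ⟨⟨_, h0⟩, _⟩ ⟨⟨_, h1⟩, _⟩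
    exact absurd (h0.symm.trans h1) (by norm_num)
  have hd0001 : Disjoint S00 S01 := by
    rw [Set.disjoint_left]; rintro ω ⟨⟨_, h0⟩, _⟩ ⟨⟨_, h1⟩, _⟩
    exact absurd (h0.symm.trans h1) (by norm_num)
  have hd0111 : Disjoint S01 S11 := by
    rw [Set.disjoint_left]; rintro ω ⟨⟨h0, _⟩, _⟩ ⟨⟨h1, _⟩, _⟩
    exact absurd (h0.symm.trans h1) (by norm_num)
  have hPU : (P ({ω | U ω = 1} ∩ A)).toReal = c + d := by
    rw [hUsplit, measure_union hd1011 hm11, ENNReal.toReal_add (hpfin _) (hpfin _)]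
  have hPU0 : (P ({ω | U ω = 0} ∩ A)).toReal = a + b := by
    rw [hU0split, measure_union hd0001 hm01, ENNReal.toReal_add (hpfin _) (hpfin _)]
  have hPW : (P ({ω | W ω = 1} ∩ A)).toReal = b + d := by
    rw [hWsplit, measure_union hd0111 hm11, ENNReal.toReal_add (hpfin _) (hpfin _)]
  -- total
  have hAsplit : A = ({ω | U ω = 0} ∩ A) ∪ ({ω | U ω = 1} ∩ A) := by
    ext ω
    simp only [Set.mem_union, Set.mem_inter_iff, Set.mem_setOf_eq]
    rcases hU01 ω with h | h <;> tauto
  have hdU : Disjoint ({ω | U ω = 0} ∩ A) ({ω | U ω = 1} ∩ A) := by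
    rw [Set.disjoint_left]; rintro ω ⟨h0, _⟩ ⟨h1, _⟩
    exact absurd (h0.symm.trans h1) (by norm_num)
  have htotal : p = a + b + (c + d) := by
    rw [hp]
    conv_lhs => rw [hAsplit]
    rw [measure_union hdU (hUm.inter hAm), ENNReal.toReal_add (hpfin _) (hpfin _), hPU, hPU0]
  -- cexp values
  have hcU : cexp P U A = (c + d) / p := by
    rw [cexp_eq_measure P U hU01 A (hUm.inter hAm), hPU]
  have hcW : cexp P W A = (b + d) / p := by
    rw [cexp_eq_measure P W hW01 A (hWm.inter hAm), hPW]
  have hUW01 : ∀ ω, U ω * W ω = 0 ∨ U ω * W ω = 1 := by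
    intro ω; rcases hU01 ω with h | h <;> rcases hW01 ω with h' | h' <;> simp [h, h']
  have hsetUW : {ω | U ω * W ω = 1} = {ω | U ω = 1} ∩ {ω | W ω = 1} := by
    ext ω
    rcases hU01 ω with h | h <;> rcases hW01 ω with h' | h' <;> simp [h, h']
  have hcUW : cexp P (fun ω => U ω * W ω) A = d / p := by
    rw [cexp_eq_measure P _ hUW01 A (by rw [hsetUW]; exact hm11)]
    congr 2
    rw [hsetUW]
  -- cprob values
  have hs1 : {ω | U ω = 0 ∧ W ω = 0} ∩ A = S00 := by
    rw [hS00]; ext ω; simp [Set.mem_setOf_eq, and_assoc]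
  have hs3 : {ω | U ω = 1 ∧ W ω = 0} ∩ A = S10 := by
    rw [hS10]; ext ω; simp [Set.mem_setOf_eq, and_assoc]
  have hε₁' : ε₁ = a / p := by
    rw [hε₁]; unfold cprob; rw [hs1]
  have hε₃' : ε₃ = c / p := by
    rw [hε₃]; unfold cprob; rw [hs3]
  rw [hcUW, hcU, hcW, hε₁', hε₃']
  have ha0 : 0 ≤ a := ENNReal.toReal_nonneg
  have hb0 : 0 ≤ b := ENNReal.toReal_nonneg
  have hc0 : 0 ≤ c := ENNReal.toReal_nonneg
  have hd0 : 0 ≤ d := ENNReal.toReal_nonneg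
  have hps : (0:ℝ) < p * p := by positivity
  have hE : d / p - (c + d) / p * ((b + d) / p)
      = (d * p - (c + d) * (b + d)) / (p * p) := by
    field_simp
  have hR : a / p + 2 * (c / p) = (a + 2 * c) / p := by ring
  rw [hE, hR, abs_div, abs_of_pos hps, div_le_div_iff₀ hps hppos]
  have hpe : p = a + b + c + d := by linarith
  have hXb : |d * p - (c + d) * (b + d)| ≤ (a + 2 * c) * p := by
    rw [hpe]; exact abs_bound_aux a b c d ha0 hb0 hc0 hd0
  nlinarith [mul_le_mul_of_nonneg_right hXb hppos.le]
end
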